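/- Let s ≥ 1. For every family (λ_Q)_{Q∈𝒟} of nonnegative real numbers indexed by the dyadic cubes of ℝ^n and every x ∈ ℝ^n, one has (∑_{Q∈𝒟} λ_Q χ_Q(x))^s ≤ s · ∑_{Q∈𝒟} λ_Q χ_Q(x) · (∑_{Q'∈𝒟, Q'⊆Q} λ_{Q'} χ_{Q'}(x))^{s−1}, where both sides take values in [0,∞]. -/

import Mathlib

/-!
At a fixed `x` the dyadic cubes containing `x` form a chain `Q_k`, one for each generation
`k ∈ ℤ`, decreasing in `k`. Both sides therefore become sums over `ℤ`, and the inner sum over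
`Q' ⊆ Q_k` dominates the tail `∑_{j ≥ k} λ_{Q_j}`. For finitely many terms the resulting
inequality telescopes from the convexity estimate `(b + d)^s ≤ b^s + s d (b + d)^{s-1}`; the
general case follows by taking the supremum over finite partial sums.
-/

open MeasureTheory ENNReal Set
open scoped Classical ENNReal NNReal

noncomputable section

/-- We model `ℝ^n` as `EuclideanSpace ℝ (Fin n)`. -/
abbrev Euc (n : ℕ) := EuclideanSpace ℝ (Fin n)

/-- Indices `(k, m)` of dyadic cubes in `ℝ^n`. -/
abbrev DIdx (n : ℕ) := ℤ × (Fin n → ℤ)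

/-- The dyadic cube with index `q = (k, m)`, namely `2^{-k}(m + [0,1)^n)`. -/
def dCube (n : ℕ) (q : DIdx n) : Set (Euc n) :=
  {x | ∀ i, (q.2 i : ℝ) ≤ (2:ℝ) ^ q.1 * x i ∧ (2:ℝ) ^ q.1 * x i < (q.2 i : ℝ) + 1}

/-- The side length of the dyadic cube of index `q = (k, m)` is `2^{-k}`. -/
def sideLen (n : ℕ) (q : DIdx n) : ℝ := (2:ℝ) ^ (-q.1)

/-- Characteristic function of a dyadic cube, with values in `ℝ≥0∞`. -/
def ch (n : ℕ) (q : DIdx n) (x : Euc n) : ℝ≥0∞ := (dCube n q).indicator 1 x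

/-- `K̄(Q)(x) = σ(Q)⁻¹ ∑_{Q' ⊆ Q} K(Q') σ(Q') χ_{Q'}(x)`.
(Since `σ(Q') ≤ σ(Q)` for `Q' ⊆ Q`, this is automatically `0` when `σ(Q) = 0`,
by the convention `∞ · 0 = 0` in `ℝ≥0∞`.) -/
def Kbar (n : ℕ) (σ : Measure (Euc n)) (K : DIdx n → ℝ≥0∞) (q : DIdx n) (x : Euc n) : ℝ≥0∞ :=
  (σ (dCube n q))⁻¹ *
    ∑' q' : DIdx n, if dCube n q' ⊆ dCube n q then K q' * σ (dCube n q') * ch n q' x else 0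

theorem Real.add_rpow_le_rpow_add_mul {b d s : ℝ} (hb : 0 ≤ b) (hd : 0 ≤ d) (hs : 1 ≤ s) :
    (b + d) ^ s ≤ b ^ s + s * (d * (b + d) ^ (s - 1)) := by
  rcases (add_nonneg hb hd).eq_or_lt with hbd | hbd
  · obtain ⟨rfl, rfl⟩ : b = 0 ∧ d = 0 := ⟨by linarith, by linarith⟩
    simp
  -- Bernoulli's inequality at `b / (b + d) = 1 - d / (b + d)`, multiplied by `(b + d) ^ s`.
  have bernoulli : 1 + s * (-(d / (b + d))) ≤ (1 + -(d / (b + d))) ^ s :=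
    one_add_mul_self_le_rpow_one_add (by rw [neg_le_neg_iff, div_le_one hbd]; linarith) hs
  have hb' : 1 + -(d / (b + d)) = b / (b + d) := by field_simp; ring
  rw [hb', Real.div_rpow hb hbd.le, le_div_iff₀ (Real.rpow_pos_of_pos hbd s)] at bernoulli
  have hpow : (b + d) ^ s = (b + d) * (b + d) ^ (s - 1) := by
    rw [← Real.rpow_one_add' hbd.le (by linarith), add_sub_cancel]
  rw [hpow] at bernoulli ⊢
  field_simp at bernoulli
  nlinarith

namespace ENNReal

theorem add_rpow_le_rpow_add_mul (b d : ℝ≥0∞) {s : ℝ} (hs : 1 ≤ s) :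
    (b + d) ^ s ≤ b ^ s + ENNReal.ofReal s * (d * (b + d) ^ (s - 1)) := by
  have hs₀ : 0 < s := by linarith
  rcases eq_or_ne b ∞ with rfl | hb
  · simp [top_rpow_of_pos hs₀]
  rcases eq_or_ne d ∞ with rfl | hd
  · have : ENNReal.ofReal s * (∞ * ∞ ^ (s - 1)) = ∞ := by
      rw [top_mul (rpow_pos_of_nonneg (by simp) (by linarith) |>.ne'), mul_top (by simpa using hs₀)]
    simp [this]
  lift b to ℝ≥0 using hb
  lift d to ℝ≥0 using hd
  have key := Real.add_rpow_le_rpow_add_mul b.coe_nonneg d.coe_nonneg hs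
  rw [← ENNReal.ofReal_le_ofReal_iff (by positivity)] at key
  convert key using 1
  · rw [← coe_add, ← ofReal_coe_nnreal, ofReal_rpow_of_nonneg (by positivity) hs₀.le]
    simp
  · rw [ofReal_add (by positivity) (by positivity), ofReal_mul hs₀.le, ofReal_mul d.coe_nonneg,
      ← ofReal_rpow_of_nonneg (by positivity) hs₀.le,
      ← ofReal_rpow_of_nonneg (by positivity) (by linarith), ofReal_add b.coe_nonneg d.coe_nonneg]
    simp

variable {α : Type*} [LinearOrder α] {s : ℝ}

theorem rpow_sum_le_mul_sum_mul_tail_rpow (hs : 1 ≤ s) (g : α → ℝ≥0∞) (F : Finset α) :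
    (∑ k ∈ F, g k) ^ s ≤
      ENNReal.ofReal s * ∑ k ∈ F, g k * (∑ j ∈ F with k ≤ j, g j) ^ (s - 1) := by
  induction F using Finset.induction_on_min with
  | empty => simp [zero_rpow_of_pos (by linarith : (0 : ℝ) < s)]
  | insert a F ha ih =>
    have ha_notMem : a ∉ F := fun h => lt_irrefl a (ha a h)
    have tail_a : ∑ j ∈ insert a F with a ≤ j, g j = ∑ k ∈ F, g k + g a := by
      rw [Finset.filter_true_of_mem fun j hj => ?_, Finset.sum_insert ha_notMem, add_comm]
      rcases Finset.mem_insert.1 hj with rfl | hj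
      exacts [le_rfl, (ha j hj).le]
    have tail_F : ∑ k ∈ F, g k * (∑ j ∈ insert a F with k ≤ j, g j) ^ (s - 1) =
        ∑ k ∈ F, g k * (∑ j ∈ F with k ≤ j, g j) ^ (s - 1) :=
      Finset.sum_congr rfl fun k hk => by rw [Finset.filter_insert, if_neg (ha k hk).not_ge]
    calc (∑ k ∈ insert a F, g k) ^ s
        = (∑ k ∈ F, g k + g a) ^ s := by rw [Finset.sum_insert ha_notMem, add_comm]
      _ ≤ (∑ k ∈ F, g k) ^ s + ENNReal.ofReal s * (g a * (∑ k ∈ F, g k + g a) ^ (s - 1)) :=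
        add_rpow_le_rpow_add_mul _ _ hs
      _ ≤ ENNReal.ofReal s * ∑ k ∈ F, g k * (∑ j ∈ F with k ≤ j, g j) ^ (s - 1) +
          ENNReal.ofReal s * (g a * (∑ k ∈ F, g k + g a) ^ (s - 1)) := by gcongr
      _ = ENNReal.ofReal s *
          ∑ k ∈ insert a F, g k * (∑ j ∈ insert a F with k ≤ j, g j) ^ (s - 1) := by
        rw [Finset.sum_insert ha_notMem, tail_a, tail_F, mul_add, add_comm]

theorem rpow_tsum_le_mul_tsum_mul_tail_rpow (hs : 1 ≤ s) (g : α → ℝ≥0∞) :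
    (∑' k, g k) ^ s ≤
      ENNReal.ofReal s * ∑' k, g k * (∑' j, if k ≤ j then g j else 0) ^ (s - 1) := by
  have hs₀ : 0 < s := by linarith
  rw [← le_rpow_inv_iff hs₀, ENNReal.tsum_eq_iSup_sum]
  refine iSup_le fun F => (le_rpow_inv_iff hs₀).2 ?_
  refine (rpow_sum_le_mul_sum_mul_tail_rpow hs g F).trans ?_
  calc _ ≤ ENNReal.ofReal s * ∑ k ∈ F, g k * (∑' j, if k ≤ j then g j else 0) ^ (s - 1) := by
        gcongr with k
        rw [Finset.sum_filter]
        exact ENNReal.sum_le_tsum F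
    _ ≤ _ := by gcongr; exact ENNReal.sum_le_tsum F

end ENNReal

theorem Int.floor_two_zpow_mul_eq_div (k : ℤ) (d : ℕ) (t : ℝ) :
    ⌊(2 : ℝ) ^ k * t⌋ = ⌊(2 : ℝ) ^ (k + d) * t⌋ / (2 ^ d : ℕ) := by
  rw [← Int.floor_div_natCast]
  congr 1
  rw [zpow_add₀ two_ne_zero, zpow_natCast]
  push_cast
  field_simp

/-- The index of the dyadic cube of side length `2^{-k}` containing `x`. -/
def dIdxAt (n : ℕ) (x : Euc n) (k : ℤ) : DIdx n := (k, fun i => ⌊(2 : ℝ) ^ k * x i⌋)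

section Dyadic

variable {n : ℕ}

theorem mem_dCube_iff {q : DIdx n} {x : Euc n} : x ∈ dCube n q ↔ q = dIdxAt n x q.1 := by
  simp only [dCube, dIdxAt, Set.mem_ofPred_eq, Prod.ext_iff, funext_iff, true_and]
  exact forall_congr' fun i => by rw [eq_comm, Int.floor_eq_iff]

theorem mem_dCube_dIdxAt (x : Euc n) (k : ℤ) : x ∈ dCube n (dIdxAt n x k) :=
  mem_dCube_iff.2 rfl

theorem dCube_dIdxAt_subset (x : Euc n) {k k' : ℤ} (h : k ≤ k') :
    dCube n (dIdxAt n x k') ⊆ dCube n (dIdxAt n x k) := by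
  obtain ⟨d, rfl⟩ := Int.le.dest h
  intro y hy
  rw [mem_dCube_iff] at hy ⊢
  simp only [dIdxAt, Prod.ext_iff, funext_iff, true_and] at hy ⊢
  intro i
  rw [Int.floor_two_zpow_mul_eq_div k d, Int.floor_two_zpow_mul_eq_div k d, hy i]

theorem tsum_mul_ch_eq_tsum_dIdxAt (f : DIdx n → ℝ≥0∞) (x : Euc n) :
    ∑' q, f q * ch n q x = ∑' k, f (dIdxAt n x k) := by
  rw [ENNReal.tsum_prod']
  refine tsum_congr fun k => (tsum_eq_single (dIdxAt n x k).2 fun m hm => ?_).trans ?_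
  · have hx : x ∉ dCube n (k, m) := fun hx => hm (congrArg Prod.snd (mem_dCube_iff.1 hx))
    simp [ch, hx]
  · change f (dIdxAt n x k) * ch n (dIdxAt n x k) x = _
    simp [ch, mem_dCube_dIdxAt]

end Dyadic

theorem stmt0_general (n : ℕ) (s : ℝ) (hs : 1 ≤ s)
    (Λ : DIdx n → ℝ≥0) (x : Euc n) :
    (∑' Q : DIdx n, (Λ Q : ℝ≥0∞) * ch n Q x) ^ s ≤
      ENNReal.ofReal s *
        ∑' Q : DIdx n, (Λ Q : ℝ≥0∞) * ch n Q x *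
          (∑' Q' : DIdx n,
              if dCube n Q' ⊆ dCube n Q then (Λ Q' : ℝ≥0∞) * ch n Q' x else 0) ^ (s - 1) := by
  set g : ℤ → ℝ≥0∞ := fun k => Λ (dIdxAt n x k)
  have tail_le (k : ℤ) : ∑' j, (if k ≤ j then g j else 0) ≤
      ∑' Q', if dCube n Q' ⊆ dCube n (dIdxAt n x k) then (Λ Q' : ℝ≥0∞) * ch n Q' x else 0 := by
    simp only [← ite_zero_mul, tsum_mul_ch_eq_tsum_dIdxAt (fun Q' => ite _ _ _) x]
    gcongr with j
    split_ifs with hkj hsub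
    exacts [le_rfl, absurd (dCube_dIdxAt_subset x hkj) hsub, zero_le, le_rfl]
  simp only [mul_right_comm _ (ch n _ x), tsum_mul_ch_eq_tsum_dIdxAt (fun Q => _ * _) x,
    tsum_mul_ch_eq_tsum_dIdxAt (fun Q => (Λ Q : ℝ≥0∞)) x]
  calc (∑' k, g k) ^ s
      ≤ ENNReal.ofReal s * ∑' k, g k * (∑' j, if k ≤ j then g j else 0) ^ (s - 1) :=
        ENNReal.rpow_tsum_le_mul_tsum_mul_tail_rpow hs g
    _ ≤ _ := by gcongr with k; exact tail_le k

/-- For `s ≥ 1`, every family `(λ_Q)` of nonnegative reals indexed by the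
dyadic cubes of `ℝ^n` and every `x ∈ ℝ^n`,
`(∑_Q λ_Q χ_Q(x))^s ≤ s ∑_Q λ_Q χ_Q(x) (∑_{Q' ⊆ Q} λ_{Q'} χ_{Q'}(x))^{s-1}`,
both sides taking values in `[0,∞]`. -/
theorem stmt0 (n : ℕ) (hn : 0 < n) (s : ℝ) (hs : 1 ≤ s)
    (Λ : DIdx n → ℝ≥0) (x : Euc n) :
    (∑' Q : DIdx n, (Λ Q : ℝ≥0∞) * ch n Q x) ^ s ≤
      ENNReal.ofReal s *
        ∑' Q : DIdx n, (Λ Q : ℝ≥0∞) * ch n Q x *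
          (∑' Q' : DIdx n,
              if dCube n Q' ⊆ dCube n Q then (Λ Q' : ℝ≥0∞) * ch n Q' x else 0) ^ (s - 1) :=
  stmt0_general n s hs Λ x
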